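/- Let α be a type, σ₁ σ₂ : Set α, and n : ℕ with n ≥ 1. Define the NFA M over α with state type Q = Unit ⊕ Unit ⊕ Unit ⊕ Fin n ⊕ Fin n, writing q₁, q₂, q₃ for the three Unit states and q₄ i, q₅ i for the Fin n states, start = {q₁}, any accept set, and steps: step q₁ a = {q₁} ∪ (if a ∉ σ₁ then {q₂} else ∅) ∪ (if a ∉ σ₂ then {q₃} else ∅); step q₂ a = if a ∈ σ₁ then {q₄ 0} else ∅; step q₃ a = if a ∈ σ₂ then {q₅ 0} else ∅; step (q₄ i) a = if a ∈ σ₁ ∧ i.val + 1 < n then {q₄ ⟨i.val + 1, _⟩} else ∅; step (q₅ i) a = if a ∈ σ₂ ∧ i.val + 1 < n then {q₅ ⟨i.val + 1, _⟩} else ∅. Then for every word w : List α, the set {i : Fin n | q₄ i ∈ M.eval w} is a subsingleton (has at most one element), and likewise {i : Fin n | q₅ i ∈ M.eval w} is a subsingleton. -/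

import Mathlib

namespace Stmt15

variable {α : Type*}

/-- The state type of the counter automaton for `Σ*(σ̄₁σ₁{n} + σ̄₂σ₂{n})`. -/
abbrev Q (n : ℕ) := Unit ⊕ Unit ⊕ Unit ⊕ Fin n ⊕ Fin n

def q₁ {n : ℕ} : Q n := Sum.inl ()
def q₂ {n : ℕ} : Q n := Sum.inr (Sum.inl ())
def q₃ {n : ℕ} : Q n := Sum.inr (Sum.inr (Sum.inl ()))
def q₄ {n : ℕ} (i : Fin n) : Q n := Sum.inr (Sum.inr (Sum.inr (Sum.inl i)))
def q₅ {n : ℕ} (i : Fin n) : Q n := Sum.inr (Sum.inr (Sum.inr (Sum.inr i)))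

open Classical in
/-- The token transition system of the counter automaton for
`Σ*(σ̄₁σ₁{n} + σ̄₂σ₂{n})`. -/
noncomputable def M (σ₁ σ₂ : Set α) (n : ℕ) [NeZero n]
    (accept : Set (Q n)) : NFA α (Q n) where
  start := {q₁}
  accept := accept
  step s a :=
    match s with
    | Sum.inl () =>
        {q₁} ∪ (if a ∉ σ₁ then {q₂} else ∅) ∪ (if a ∉ σ₂ then {q₃} else ∅)
    | Sum.inr (Sum.inl ()) => if a ∈ σ₁ then {q₄ 0} else ∅
    | Sum.inr (Sum.inr (Sum.inl ())) => if a ∈ σ₂ then {q₅ 0} else ∅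
    | Sum.inr (Sum.inr (Sum.inr (Sum.inl i))) =>
        if h : a ∈ σ₁ ∧ i.val + 1 < n then {q₄ ⟨i.val + 1, h.2⟩} else ∅
    | Sum.inr (Sum.inr (Sum.inr (Sum.inr i))) =>
        if h : a ∈ σ₂ ∧ i.val + 1 < n then {q₅ ⟨i.val + 1, h.2⟩} else ∅

lemma mem_step_q4 {σ₁ σ₂ : Set α} {n : ℕ} [NeZero n] {accept : Set (Q n)}
    {s : Q n} {a : α} {j : Fin n} (h : q₄ j ∈ (M σ₁ σ₂ n accept).step s a) :
    a ∈ σ₁ ∧ ((s = q₂ ∧ j.val = 0) ∨ ∃ i : Fin n, s = q₄ i ∧ j.val = i.val + 1) := by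
  rcases s with _ | _ | _ | i | i <;>
    simp only [M, q₁, q₂, q₃, q₄, q₅] at h ⊢ <;> split at h <;>
    simp_all

lemma mem_step_q5 {σ₁ σ₂ : Set α} {n : ℕ} [NeZero n] {accept : Set (Q n)}
    {s : Q n} {a : α} {j : Fin n} (h : q₅ j ∈ (M σ₁ σ₂ n accept).step s a) :
    a ∈ σ₂ ∧ ((s = q₃ ∧ j.val = 0) ∨ ∃ i : Fin n, s = q₅ i ∧ j.val = i.val + 1) := by
  rcases s with _ | _ | _ | i | i <;>
    simp only [M, q₁, q₂, q₃, q₄, q₅] at h ⊢ <;> split at h <;>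
    simp_all

lemma mem_step_q2 {σ₁ σ₂ : Set α} {n : ℕ} [NeZero n] {accept : Set (Q n)}
    {s : Q n} {a : α} (h : q₂ ∈ (M σ₁ σ₂ n accept).step s a) : a ∉ σ₁ := by
  rcases s with _ | _ | _ | i | i <;>
    simp only [M, q₁, q₂, q₃, q₄, q₅] at h ⊢ <;> split at h <;>
    simp_all [Fin.ext_iff] <;> split at h <;> simp_all

lemma mem_step_q3 {σ₁ σ₂ : Set α} {n : ℕ} [NeZero n] {accept : Set (Q n)}
    {s : Q n} {a : α} (h : q₃ ∈ (M σ₁ σ₂ n accept).step s a) : a ∉ σ₂ := by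
  rcases s with _ | _ | _ | i | i <;>
    simp only [M, q₁, q₂, q₃, q₄, q₅] at h ⊢ <;> split at h <;>
    simp_all [Fin.ext_iff] <;> split at h <;> simp_all

lemma inv (σ₁ σ₂ : Set α) (n : ℕ) [NeZero n] (accept : Set (Q n)) (w : List α) :
    ({i : Fin n | q₄ i ∈ (M σ₁ σ₂ n accept).eval w}.Subsingleton ∧
      (q₂ ∈ (M σ₁ σ₂ n accept).eval w → ∀ i, q₄ i ∉ (M σ₁ σ₂ n accept).eval w)) ∧
    ({i : Fin n | q₅ i ∈ (M σ₁ σ₂ n accept).eval w}.Subsingleton ∧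
      (q₃ ∈ (M σ₁ σ₂ n accept).eval w → ∀ i, q₅ i ∉ (M σ₁ σ₂ n accept).eval w)) := by
  induction w using List.reverseRecOn with
  | nil =>
      constructor <;> constructor
      · intro i hi j hj
        simp only [NFA.eval_nil, M, Set.mem_setOf_eq, Set.mem_singleton_iff, q₁, q₄] at hi
        simp at hi
      · intro h
        simp only [NFA.eval_nil, M, Set.mem_singleton_iff, q₁, q₂] at h
        simp at h
      · intro i hi j hj
        simp only [NFA.eval_nil, M, Set.mem_setOf_eq, Set.mem_singleton_iff, q₁, q₅] at hi
        simp at hi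
      · intro h
        simp only [NFA.eval_nil, M, Set.mem_singleton_iff, q₁, q₃] at h
        simp at h
  | append_singleton w a ih =>
      obtain ⟨⟨h4ss, h24⟩, h5ss, h35⟩ := ih
      rw [NFA.eval_append_singleton]
      constructor <;> constructor
      · intro i hi j hj
        simp only [Set.mem_setOf_eq, NFA.mem_stepSet] at hi hj
        obtain ⟨s, hs, hstep⟩ := hi
        obtain ⟨t, ht, htstep⟩ := hj
        obtain ⟨ha, hcase⟩ := mem_step_q4 hstep
        obtain ⟨-, hcase'⟩ := mem_step_q4 htstep
        rcases hcase with ⟨rfl, hi0⟩ | ⟨i', rfl, hii⟩ <;>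
          rcases hcase' with ⟨rfl, hj0⟩ | ⟨j', rfl, hjj⟩
        · exact Fin.ext (hi0.trans hj0.symm)
        · exact absurd ht (h24 hs j')
        · exact absurd hs (h24 ht i')
        · have : i' = j' := h4ss hs ht
          subst this
          exact Fin.ext (by omega)
      · intro h i hi
        simp only [NFA.mem_stepSet] at h hi
        obtain ⟨s, hs, hstep⟩ := h
        obtain ⟨t, ht, htstep⟩ := hi
        exact mem_step_q2 hstep (mem_step_q4 htstep).1
      · intro i hi j hj
        simp only [Set.mem_setOf_eq, NFA.mem_stepSet] at hi hj
        obtain ⟨s, hs, hstep⟩ := hi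
        obtain ⟨t, ht, htstep⟩ := hj
        obtain ⟨ha, hcase⟩ := mem_step_q5 hstep
        obtain ⟨-, hcase'⟩ := mem_step_q5 htstep
        rcases hcase with ⟨rfl, hi0⟩ | ⟨i', rfl, hii⟩ <;>
          rcases hcase' with ⟨rfl, hj0⟩ | ⟨j', rfl, hjj⟩
        · exact Fin.ext (hi0.trans hj0.symm)
        · exact absurd ht (h35 hs j')
        · exact absurd hs (h35 ht i')
        · have : i' = j' := h5ss hs ht
          subst this
          exact Fin.ext (by omega)
      · intro h i hi
        simp only [NFA.mem_stepSet] at h hi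
        obtain ⟨s, hs, hstep⟩ := h
        obtain ⟨t, ht, htstep⟩ := hi
        exact mem_step_q3 hstep (mem_step_q5 htstep).1

theorem stmt_15 (σ₁ σ₂ : Set α) (n : ℕ) [NeZero n] (hn : 1 ≤ n)
    (accept : Set (Q n)) (w : List α) :
    {i : Fin n | q₄ i ∈ (M σ₁ σ₂ n accept).eval w}.Subsingleton ∧
      {i : Fin n | q₅ i ∈ (M σ₁ σ₂ n accept).eval w}.Subsingleton := by
  obtain ⟨⟨h1, -⟩, h2, -⟩ := inv σ₁ σ₂ n accept w
  exact ⟨h1, h2⟩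

end Stmt15
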